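/- Let X ~ N(μ, 1) and let z > 0. If 0 < μ ≤ z then P(|X − μ| < z ∣ |X| > z) < P(|X − μ| < z) = 2Φ(z) − 1. Consequently, for b ~ N(β, se²) with se > 0 and signal-to-noise ratio |β|/se at most z = z_{1−α/2}, the conditional coverage P(|b − β|/se < z ∣ |b|/se > z) is strictly less than the nominal coverage 1 − α. -/

import Mathlib

open MeasureTheory ProbabilityTheory

/-- The standard normal cumulative distribution function Φ. -/
noncomputable def Phi (x : ℝ) : ℝ :=
  ∫ t in Set.Iic x, (Real.sqrt (2 * Real.pi))⁻¹ * Real.exp (-t ^ 2 / 2)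

/-- The Gaussian distribution with mean `m` and standard deviation `s`. -/
noncomputable def gauss (m s : ℝ) : Measure ℝ := gaussianReal m (Real.toNNReal (s ^ 2))

/-!
When `0 < μ ≤ z`, the event `{|X - μ| < z, |X| > z}` is the interval `(z, μ + z)`, so the
conditional coverage is `(Φ(z) - Φ(z - μ)) / (Φ(-z - μ) + 1 - Φ(z - μ))`. It lies below
`2Φ(z) - 1` because `Φ(z - μ) ≥ 1/2` and `Φ(-z - μ) > 0`. Negative means reduce to positive ones
through the symmetry `X ↦ -X`, and `b ~ N(β, se²)` reduces to `N(β/se, 1)` by scaling.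
-/

open Set

section GaussianIntervals

variable (μ : ℝ)

lemma Phi_eq_measureReal_Iic (a : ℝ) : Phi a = (gaussianReal 0 1).real (Iic a) := by
  rw [measureReal_def, gaussianReal_apply_eq_integral 0 one_ne_zero,
    ENNReal.toReal_ofReal
      (setIntegral_nonneg measurableSet_Iic fun x _ => gaussianPDFReal_nonneg _ _ _)]
  simp [Phi, gaussianPDFReal]

lemma measureReal_gaussianReal_Iic (a : ℝ) : (gaussianReal μ 1).real (Iic a) = Phi (a - μ) := by
  rw [Phi_eq_measureReal_Iic, ← sub_self μ, ← gaussianReal_map_sub_const μ,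
    measureReal_def, measureReal_def, Measure.map_apply (measurable_sub_const μ) measurableSet_Iic]
  congr 2
  ext x
  simp

lemma measureReal_gaussianReal_Iio (a : ℝ) : (gaussianReal μ 1).real (Iio a) = Phi (a - μ) := by
  have := nullSingletonClass_gaussianReal (μ := μ) one_ne_zero
  rw [measureReal_congr Iio_ae_eq_Iic, measureReal_gaussianReal_Iic]

lemma measureReal_gaussianReal_Ioi (a : ℝ) :
    (gaussianReal μ 1).real (Ioi a) = 1 - Phi (a - μ) := by
  rw [← compl_Iic, probReal_compl_eq_one_sub measurableSet_Iic, measureReal_gaussianReal_Iic]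

lemma measureReal_gaussianReal_Ioo {a b : ℝ} (hab : a ≤ b) :
    (gaussianReal μ 1).real (Ioo a b) = Phi (b - μ) - Phi (a - μ) := by
  have := nullSingletonClass_gaussianReal (μ := μ) one_ne_zero
  have hIoc : Ioc a b = Iic b \ Iic a := by
    ext x
    simp [and_comm]
  rw [measureReal_congr Ioo_ae_eq_Ioc, hIoc, measureReal_sdiff (Iic_subset_Iic.2 hab)
    measurableSet_Iic, measureReal_gaussianReal_Iic, measureReal_gaussianReal_Iic]

lemma measureReal_gaussianReal_pos {s : Set ℝ} (hs : IsOpen s) (hne : s.Nonempty) :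
    0 < (gaussianReal μ 1).real s := by
  have := (gaussianReal_absolutelyContinuous' μ one_ne_zero).isOpenPosMeasure
  exact ENNReal.toReal_pos (hs.measure_pos _ hne).ne' (measure_ne_top _ _)

lemma measureReal_gaussianReal_preimage_neg {v : NNReal} {s : Set ℝ} (hs : MeasurableSet s) :
    (gaussianReal μ v).real (Neg.neg ⁻¹' s) = (gaussianReal (-μ) v).real s := by
  rw [← gaussianReal_map_neg, map_measureReal_apply measurable_neg hs]

end GaussianIntervals

lemma Phi_pos (a : ℝ) : 0 < Phi a := by
  simpa [measureReal_gaussianReal_Iio] using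
    measureReal_gaussianReal_pos 0 isOpen_Iio (nonempty_Iio (a := a))

lemma Phi_le_one (a : ℝ) : Phi a ≤ 1 := by
  rw [Phi_eq_measureReal_Iic]
  exact measureReal_le_one

lemma Phi_strictMono : StrictMono Phi := by
  intro a b hab
  have := measureReal_gaussianReal_pos 0 isOpen_Ioo (nonempty_Ioo.2 hab)
  rw [measureReal_gaussianReal_Ioo 0 hab.le] at this
  simpa using this

lemma Phi_neg (a : ℝ) : Phi (-a) = 1 - Phi a := by
  calc Phi (-a) = (gaussianReal (-0) 1).real (Iio (-a)) := by
        rw [neg_zero, measureReal_gaussianReal_Iio, sub_zero]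
    _ = (gaussianReal 0 1).real (Ioi a) := by
        rw [← measureReal_gaussianReal_preimage_neg 0 measurableSet_Iio, neg_preimage, neg_Iio,
          neg_neg]
    _ = 1 - Phi a := by rw [measureReal_gaussianReal_Ioi, sub_zero]

lemma Phi_zero : Phi 0 = 1 / 2 := by
  have h := Phi_neg 0
  rw [neg_zero] at h
  linarith

lemma setOf_lt_abs_eq_Iio_union_Ioi (z : ℝ) : {x : ℝ | z < |x|} = Iio (-z) ∪ Ioi z := by
  ext x
  simp only [mem_ofPred_eq, lt_abs, mem_union, mem_Iio, mem_Ioi, lt_neg, or_comm]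

lemma setOf_abs_sub_lt_eq_Ioo (μ z : ℝ) : {x : ℝ | |x - μ| < z} = Ioo (μ - z) (μ + z) := by
  ext x
  simp only [mem_ofPred_eq, abs_sub_lt_iff, mem_Ioo]
  constructor <;> rintro ⟨h₁, h₂⟩ <;> constructor <;> linarith

lemma setOf_abs_sub_lt_and_lt_abs_eq_Ioo {μ z : ℝ} (hμ : 0 < μ) (hμz : μ ≤ z) :
    {x : ℝ | |x - μ| < z ∧ z < |x|} = Ioo z (μ + z) := by
  ext x
  simp only [mem_ofPred_eq, abs_sub_lt_iff, lt_abs, mem_Ioo]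
  constructor
  · rintro ⟨⟨h₁, h₂⟩, h₃ | h₃⟩ <;> constructor <;> linarith
  · rintro ⟨h₁, h₂⟩
    exact ⟨⟨by linarith, by linarith⟩, Or.inl h₁⟩

-- `(2a - 1)(v + 1 - u) - (a - u) = (2a - 1)v + (1 - a)(2u - 1)`
lemma sub_div_add_one_sub_lt_two_mul_sub_one {a u v : ℝ} (hu : 1 / 2 ≤ u) (hua : u < a)
    (ha : a ≤ 1) (hv : 0 < v) : (a - u) / (v + (1 - u)) < 2 * a - 1 := by
  rw [div_lt_iff₀ (by linarith)]
  nlinarith [mul_pos (by linarith : (0 : ℝ) < 2 * a - 1) hv,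
    mul_nonneg (by linarith : (0 : ℝ) ≤ 1 - a) (by linarith : (0 : ℝ) ≤ 2 * u - 1)]

/-- `P(|X - m| < z ∣ |X| > z)` for `X ~ P`. -/
noncomputable def condCoverage (P : Measure ℝ) (m z : ℝ) : ℝ :=
  P.real {x | |x - m| < z ∧ z < |x|} / P.real {x | z < |x|}

lemma measureReal_gaussianReal_abs_sub_lt (μ : ℝ) {z : ℝ} (hz : 0 ≤ z) :
    (gaussianReal μ 1).real {x | |x - μ| < z} = 2 * Phi z - 1 := by
  rw [setOf_abs_sub_lt_eq_Ioo, measureReal_gaussianReal_Ioo μ (by linarith), add_sub_cancel_left,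
    sub_sub_cancel_left, Phi_neg]
  ring

lemma condCoverage_gaussianReal_lt_of_pos {μ z : ℝ} (hμ : 0 < μ) (hμz : μ ≤ z) :
    condCoverage (gaussianReal μ 1) μ z < 2 * Phi z - 1 := by
  have hz : 0 < z := hμ.trans_le hμz
  rw [condCoverage, setOf_abs_sub_lt_and_lt_abs_eq_Ioo hμ hμz, setOf_lt_abs_eq_Iio_union_Ioi,
    measureReal_union (Iio_disjoint_Ioi_of_le (by linarith)) measurableSet_Ioi,
    measureReal_gaussianReal_Ioo μ (by linarith), measureReal_gaussianReal_Iio,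
    measureReal_gaussianReal_Ioi, add_sub_cancel_left]
  refine sub_div_add_one_sub_lt_two_mul_sub_one ?_ (Phi_strictMono (by linarith)) (Phi_le_one z)
    (Phi_pos _)
  rw [← Phi_zero]
  exact Phi_strictMono.monotone (by linarith)

lemma condCoverage_gaussianReal_neg (μ z : ℝ) :
    condCoverage (gaussianReal (-μ) 1) (-μ) z = condCoverage (gaussianReal μ 1) μ z := by
  unfold condCoverage
  rw [← measureReal_gaussianReal_preimage_neg μ (by measurability),
    ← measureReal_gaussianReal_preimage_neg μ (by measurability)]
  congr 2 <;> ext x <;>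
    simp only [mem_preimage, mem_ofPred_eq, neg_sub_neg, abs_neg, abs_sub_comm μ]

lemma condCoverage_gaussianReal_lt {μ z : ℝ} (hμ : μ ≠ 0) (hμz : |μ| ≤ z) :
    condCoverage (gaussianReal μ 1) μ z < 2 * Phi z - 1 := by
  rcases hμ.lt_or_gt with hneg | hpos
  · rw [← neg_neg μ, condCoverage_gaussianReal_neg]
    exact condCoverage_gaussianReal_lt_of_pos (neg_pos.2 hneg) (neg_le_abs μ |>.trans hμz)
  · exact condCoverage_gaussianReal_lt_of_pos hpos (le_abs_self μ |>.trans hμz)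

lemma measureReal_gauss_preimage_div (β : ℝ) {se : ℝ} (hse : se ≠ 0) {s : Set ℝ}
    (hs : MeasurableSet s) :
    (gauss β se).real ((· / se) ⁻¹' s) = (gaussianReal (β / se) 1).real s := by
  have hvar : Real.toNNReal (se ^ 2) / NNReal.mk (se ^ 2) (sq_nonneg _) = 1 := by
    ext
    simp [max_eq_left (sq_nonneg se), hse]
  rw [gauss, ← map_measureReal_apply (measurable_div_const se) hs, gaussianReal_map_div_const, hvar]

lemma condCoverage_gauss {β se : ℝ} (hse : 0 < se) (z : ℝ) :
    (gauss β se).real {x | |x - β| / se < z ∧ z < |x| / se}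
        / (gauss β se).real {x | z < |x| / se}
      = condCoverage (gaussianReal (β / se) 1) (β / se) z := by
  have habs (x : ℝ) : |x / se| = |x| / se := by rw [abs_div, abs_of_pos hse]
  have hnum : {x | |x - β| / se < z ∧ z < |x| / se}
      = (· / se) ⁻¹' {y | |y - β / se| < z ∧ z < |y|} := by
    ext x
    simp only [mem_preimage, mem_ofPred_eq, ← sub_div, habs]
  have hden : {x | z < |x| / se} = (· / se) ⁻¹' {y | z < |y|} := by
    ext x
    simp only [mem_preimage, mem_ofPred_eq, habs]
  rw [hnum, hden, measureReal_gauss_preimage_div β hse.ne' (by measurability),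
    measureReal_gauss_preimage_div β hse.ne' (by measurability), condCoverage]

/-- For `X ~ N(μ, 1)`, `z > 0` and `0 < μ ≤ z`:
`P(|X − μ| < z ∣ |X| > z) < P(|X − μ| < z) = 2Φ(z) − 1`.  Consequently, for
`b ~ N(β, se²)` with `se > 0` and signal-to-noise ratio `0 < |β|/se ≤ z` where
`z = z_{1−α/2}` (i.e. `Φ(z) = 1 − α/2`), the conditional coverage
`P(|b − β|/se < z ∣ |b|/se > z)` is strictly less than `1 − α`.
Here `P(B ∣ A) = P(B ∩ A)/P(A)`. -/
theorem conditional_coverage_lt_nominal :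
    (∀ μ z : ℝ, 0 < z → 0 < μ → μ ≤ z →
      ((gaussianReal μ 1) {x : ℝ | |x - μ| < z ∧ z < |x|}).toReal
          / ((gaussianReal μ 1) {x : ℝ | z < |x|}).toReal
        < ((gaussianReal μ 1) {x : ℝ | |x - μ| < z}).toReal ∧
      ((gaussianReal μ 1) {x : ℝ | |x - μ| < z}).toReal = 2 * Phi z - 1) ∧
    (∀ α z β se : ℝ, 0 < α → α < 1 → Phi z = 1 - α / 2 → 0 < se → β ≠ 0 →
      |β| / se ≤ z →
      ((gauss β se) {x : ℝ | |x - β| / se < z ∧ z < |x| / se}).toReal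
          / ((gauss β se) {x : ℝ | z < |x| / se}).toReal < 1 - α) := by
  simp only [← measureReal_def]
  refine ⟨fun μ z hz hμ hμz => ?_, fun α z β se _ _ hΦ hse hβ hβz => ?_⟩
  · rw [measureReal_gaussianReal_abs_sub_lt μ hz.le]
    exact ⟨condCoverage_gaussianReal_lt_of_pos hμ hμz, rfl⟩
  · have hsnr : |β / se| ≤ z := by rwa [abs_div, abs_of_pos hse]
    rw [condCoverage_gauss hse]
    calc condCoverage (gaussianReal (β / se) 1) (β / se) z < 2 * Phi z - 1 :=
          condCoverage_gaussianReal_lt (div_ne_zero hβ hse.ne') hsnr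
      _ = 1 - α := by rw [hΦ]; ring
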